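/- arXiv:gr-qc/0006035 — 2 statements merged into one kernel-verified Lean document; each statement's English description precedes it below -/
import Mathlib

section
/- Let γ = 2 and let x be a solution of the Wainwright–Hsu system with Ω > 0. Then there exist α > 0 and T ∈ ℝ such that |N₁N₂|(τ) + |N₂N₃|(τ) + |N₃N₁|(τ) ≤ e^{ατ} for all τ ≤ T. -/
open Real Filter Topology Set

noncomputable section

namespace WainwrightHsu

/-- The deceleration parameter `q` of the Wainwright–Hsu system. -/
def qf (γ O Sp Sm : ℝ) : ℝ := (1/2) * (3*γ - 2) * O + 2 * (Sp^2 + Sm^2)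

/-- The curvature term `S₊`. -/
def SPf (n1 n2 n3 : ℝ) : ℝ := (1/2) * ((n2 - n3)^2 - n1 * (2*n1 - n2 - n3))

/-- The curvature term `S₋`. -/
def SMf (n1 n2 n3 : ℝ) : ℝ := (Real.sqrt 3 / 2) * (n3 - n2) * (n1 - n2 - n3)

/-- The Hamiltonian constraint. -/
def Constraint (O Sp Sm n1 n2 n3 : ℝ) : Prop :=
  O + Sp^2 + Sm^2 + (3/4) * (n1^2 + n2^2 + n3^2 - 2*(n1*n2 + n2*n3 + n3*n1)) = 1

/-- `(O, Sp, Sm, n1, n2, n3)` is a solution of the Wainwright–Hsu system (with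
parameter `γ`) on the set `s ⊆ ℝ`, satisfying `Ω ≥ 0` and the constraint. -/
structure SolOn (γ : ℝ) (s : Set ℝ) (O Sp Sm n1 n2 n3 : ℝ → ℝ) : Prop where
  hn1 : ∀ τ ∈ s, HasDerivAt n1 ((qf γ (O τ) (Sp τ) (Sm τ) - 4 * Sp τ) * n1 τ) τ
  hn2 : ∀ τ ∈ s, HasDerivAt n2
    ((qf γ (O τ) (Sp τ) (Sm τ) + 2 * Sp τ + 2 * Real.sqrt 3 * Sm τ) * n2 τ) τ
  hn3 : ∀ τ ∈ s, HasDerivAt n3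
    ((qf γ (O τ) (Sp τ) (Sm τ) + 2 * Sp τ - 2 * Real.sqrt 3 * Sm τ) * n3 τ) τ
  hSp : ∀ τ ∈ s, HasDerivAt Sp
    (-(2 - qf γ (O τ) (Sp τ) (Sm τ)) * Sp τ - 3 * SPf (n1 τ) (n2 τ) (n3 τ)) τ
  hSm : ∀ τ ∈ s, HasDerivAt Sm
    (-(2 - qf γ (O τ) (Sp τ) (Sm τ)) * Sm τ - 3 * SMf (n1 τ) (n2 τ) (n3 τ)) τ
  hO : ∀ τ ∈ s, HasDerivAt O ((2 * qf γ (O τ) (Sp τ) (Sm τ) - (3*γ - 2)) * O τ) τ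
  hOnn : ∀ τ ∈ s, 0 ≤ O τ
  hcon : ∀ τ ∈ s, Constraint (O τ) (Sp τ) (Sm τ) (n1 τ) (n2 τ) (n3 τ)

/-- The solution is of Taub type. -/
def TaubType (s : Set ℝ) (Sp Sm n1 n2 n3 : ℝ → ℝ) : Prop :=
  (∀ τ ∈ s, Sm τ = 0 ∧ n2 τ = n3 τ) ∨
  (∀ τ ∈ s, Sm τ = -(Real.sqrt 3) * Sp τ ∧ n1 τ = n2 τ) ∨
  (∀ τ ∈ s, Sm τ = Real.sqrt 3 * Sp τ ∧ n3 τ = n1 τ)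

/-- The solution converges to the fixed point `F` as `τ → -∞`. -/
def TendstoF (O Sp Sm n1 n2 n3 : ℝ → ℝ) : Prop :=
  Tendsto O atBot (𝓝 1) ∧ Tendsto Sp atBot (𝓝 0) ∧ Tendsto Sm atBot (𝓝 0) ∧
  Tendsto n1 atBot (𝓝 0) ∧ Tendsto n2 atBot (𝓝 0) ∧ Tendsto n3 atBot (𝓝 0)

/-- The solution converges to the fixed point `P₁⁺(II)` as `τ → -∞`. -/
def TendstoP1 (γ : ℝ) (O Sp Sm n1 n2 n3 : ℝ → ℝ) : Prop :=
  Tendsto O atBot (𝓝 (1 - (3*γ - 2)/16)) ∧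
  Tendsto Sp atBot (𝓝 ((3*γ - 2)/8)) ∧ Tendsto Sm atBot (𝓝 0) ∧
  (∃ c : ℝ, 0 < c ∧ Tendsto n1 atBot (𝓝 c)) ∧
  Tendsto n2 atBot (𝓝 0) ∧ Tendsto n3 atBot (𝓝 0)

/-- The solution converges to the fixed point `P₂⁺(II)` as `τ → -∞`. -/
def TendstoP2 (γ : ℝ) (O Sp Sm n1 n2 n3 : ℝ → ℝ) : Prop :=
  Tendsto O atBot (𝓝 (1 - (3*γ - 2)/16)) ∧
  Tendsto Sp atBot (𝓝 (-((3*γ - 2)/16))) ∧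
  Tendsto Sm atBot (𝓝 (-(Real.sqrt 3 * (3*γ - 2)/16))) ∧
  Tendsto n1 atBot (𝓝 0) ∧
  (∃ c : ℝ, 0 < c ∧ Tendsto n2 atBot (𝓝 c)) ∧ Tendsto n3 atBot (𝓝 0)

/-- The solution converges to the fixed point `P₃⁺(II)` as `τ → -∞`. -/
def TendstoP3 (γ : ℝ) (O Sp Sm n1 n2 n3 : ℝ → ℝ) : Prop :=
  Tendsto O atBot (𝓝 (1 - (3*γ - 2)/16)) ∧
  Tendsto Sp atBot (𝓝 (-((3*γ - 2)/16))) ∧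
  Tendsto Sm atBot (𝓝 (Real.sqrt 3 * (3*γ - 2)/16)) ∧
  Tendsto n1 atBot (𝓝 0) ∧ Tendsto n2 atBot (𝓝 0) ∧
  (∃ c : ℝ, 0 < c ∧ Tendsto n3 atBot (𝓝 c))

/-- A Bianchi IX solution is generic if it is not of Taub type and does not
converge to `F` nor to any of the `Pᵢ⁺(II)` as `τ → -∞`. -/
def Generic (γ : ℝ) (s : Set ℝ) (O Sp Sm n1 n2 n3 : ℝ → ℝ) : Prop :=
  ¬ TaubType s Sp Sm n1 n2 n3 ∧ ¬ TendstoF O Sp Sm n1 n2 n3 ∧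
  ¬ TendstoP1 γ O Sp Sm n1 n2 n3 ∧ ¬ TendstoP2 γ O Sp Sm n1 n2 n3 ∧
  ¬ TendstoP3 γ O Sp Sm n1 n2 n3

/-- `(a, b, c, d, e, f)` is an α-limit point of the solution:
some sequence of times tending to `-∞` along which the solution converges to it. -/
def AlphaLim (O Sp Sm n1 n2 n3 : ℝ → ℝ) (a b c d e f : ℝ) : Prop :=
  ∃ τs : ℕ → ℝ, Tendsto τs atTop atBot ∧
    Tendsto (fun k => O (τs k)) atTop (𝓝 a) ∧
    Tendsto (fun k => Sp (τs k)) atTop (𝓝 b) ∧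
    Tendsto (fun k => Sm (τs k)) atTop (𝓝 c) ∧
    Tendsto (fun k => n1 (τs k)) atTop (𝓝 d) ∧
    Tendsto (fun k => n2 (τs k)) atTop (𝓝 e) ∧
    Tendsto (fun k => n3 (τs k)) atTop (𝓝 f)

/-- ω-limit point (times tending to `+∞`). -/
def OmegaLim (O Sp Sm n1 n2 n3 : ℝ → ℝ) (a b c d e f : ℝ) : Prop :=
  ∃ τs : ℕ → ℝ, Tendsto τs atTop atTop ∧
    Tendsto (fun k => O (τs k)) atTop (𝓝 a) ∧
    Tendsto (fun k => Sp (τs k)) atTop (𝓝 b) ∧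
    Tendsto (fun k => Sm (τs k)) atTop (𝓝 c) ∧
    Tendsto (fun k => n1 (τs k)) atTop (𝓝 d) ∧
    Tendsto (fun k => n2 (τs k)) atTop (𝓝 e) ∧
    Tendsto (fun k => n3 (τs k)) atTop (𝓝 f)

/-- α-limit point, phrased for a point of `ℝ⁶` (in coordinates `Ω, Σ₊, Σ₋, N₁, N₂, N₃`). -/
def AlphaLimPt (O Sp Sm n1 n2 n3 : ℝ → ℝ) (p : Fin 6 → ℝ) : Prop :=
  ∃ τs : ℕ → ℝ, Tendsto τs atTop atBot ∧
    Tendsto (fun k =>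
      (![O (τs k), Sp (τs k), Sm (τs k), n1 (τs k), n2 (τs k), n3 (τs k)] : Fin 6 → ℝ))
      atTop (𝓝 p)

/-- A non-special point of the Kasner circle, given by its `(Σ₊, Σ₋)` coordinates. -/
def NonSpecialKasner (a b : ℝ) : Prop :=
  a^2 + b^2 = 1 ∧ (a, b) ≠ (-1, 0) ∧
  (a, b) ≠ (1/2, Real.sqrt 3 / 2) ∧ (a, b) ≠ (1/2, -(Real.sqrt 3) / 2)

/-- The state vector of a solution, as a point of Euclidean `ℝ⁶`. -/
def stateVec (O Sp Sm n1 n2 n3 : ℝ → ℝ) (τ : ℝ) : EuclideanSpace ℝ (Fin 6) :=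
  (WithLp.equiv 2 (Fin 6 → ℝ)).symm ![O τ, Sp τ, Sm τ, n1 τ, n2 τ, n3 τ]

/-- The Bianchi attractor `𝒜`: the closure of the vacuum type I and II points, i.e. the
points of `ℝ⁶` satisfying the constraint with `Ω = 0` and `N₁N₂ = N₂N₃ = N₃N₁ = 0`. -/
def attractor : Set (EuclideanSpace ℝ (Fin 6)) :=
  {y | Constraint (y 0) (y 1) (y 2) (y 3) (y 4) (y 5) ∧
    y 0 = 0 ∧ y 3 * y 4 = 0 ∧ y 4 * y 5 = 0 ∧ y 5 * y 3 = 0}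



private lemma mono_Iic {f f' : ℝ → ℝ} {X : ℝ}
    (hf : ∀ τ ∈ Set.Iic X, HasDerivAt f (f' τ) τ)
    (h0 : ∀ τ ∈ Set.Iic X, 0 ≤ f' τ) :
    ∀ τ ≤ X, f τ ≤ f X := by
  intro τ hτ
  have hmono : MonotoneOn f (Set.Iic X) := by
    apply monotoneOn_of_deriv_nonneg (convex_Iic X)
    · exact fun x hx => (hf x hx).continuousAt.continuousWithinAt
    · intro x hx
      rw [interior_Iic] at hx
      exact ((hf x (Set.mem_Iic.mpr (le_of_lt hx))).differentiableAt).differentiableWithinAt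
    · intro x hx
      rw [interior_Iic] at hx
      rw [(hf x (Set.mem_Iic.mpr (le_of_lt hx))).deriv]
      exact h0 x (Set.mem_Iic.mpr (le_of_lt hx))
  exact hmono hτ (Set.mem_Iic.mpr (le_refl X)) hτ

private lemma anti_Iic {f f' : ℝ → ℝ} {X : ℝ}
    (hf : ∀ τ ∈ Set.Iic X, HasDerivAt f (f' τ) τ)
    (h0 : ∀ τ ∈ Set.Iic X, f' τ ≤ 0) :
    ∀ τ ≤ X, f X ≤ f τ := by
  intro τ hτ
  have hanti : AntitoneOn f (Set.Iic X) := by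
    apply antitoneOn_of_deriv_nonpos (convex_Iic X)
    · exact fun x hx => (hf x hx).continuousAt.continuousWithinAt
    · intro x hx
      rw [interior_Iic] at hx
      exact ((hf x (Set.mem_Iic.mpr (le_of_lt hx))).differentiableAt).differentiableWithinAt
    · intro x hx
      rw [interior_Iic] at hx
      rw [(hf x (Set.mem_Iic.mpr (le_of_lt hx))).deriv]
      exact h0 x (Set.mem_Iic.mpr (le_of_lt hx))
  exact hanti hτ (Set.mem_Iic.mpr (le_refl X)) hτ

private lemma K_lower {a b c y : ℝ} (hy : 0 ≤ y) (h3 : y^3 = (a*b*c)^2) :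
    -(4*y) ≤ a^2 + b^2 + c^2 - 2*(a*b + b*c + c*a) := by
  rcases le_or_gt (a*b) 0 with h | hab
  · nlinarith [sq_nonneg (a+b-c)]
  rcases le_or_gt (b*c) 0 with h | hbc
  · nlinarith [sq_nonneg (b+c-a)]
  rcases le_or_gt (c*a) 0 with h | hca
  · nlinarith [sq_nonneg (c+a-b)]
  set m := min (a*b) (min (b*c) (c*a)) with hm
  have hm1 : m ≤ a*b := min_le_left _ _
  have hm2 : m ≤ b*c := le_trans (min_le_right _ _) (min_le_left _ _)
  have hm3 : m ≤ c*a := le_trans (min_le_right _ _) (min_le_right _ _)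
  have hmpos : 0 < m := lt_min hab (lt_min hbc hca)
  have hcube : m^3 ≤ y^3 := by
    rw [h3]
    have h1 : m*m ≤ (a*b)*(b*c) := mul_le_mul hm1 hm2 hmpos.le (by positivity)
    have h2 : (m*m)*m ≤ ((a*b)*(b*c))*(c*a) :=
      mul_le_mul h1 hm3 hmpos.le (by positivity)
    nlinarith [h2]
  have hmy : m ≤ y := le_of_pow_le_pow_left₀ (by norm_num) hy hcube
  have hK : -(4*m) ≤ a^2 + b^2 + c^2 - 2*(a*b + b*c + c*a) := by
    rcases le_total (a*b) (min (b*c) (c*a)) with h | h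
    · rw [hm, min_eq_left h]; nlinarith [sq_nonneg (a+b-c)]
    · rw [hm, min_eq_right h]
      rcases le_total (b*c) (c*a) with h' | h'
      · rw [min_eq_left h']; nlinarith [sq_nonneg (b+c-a)]
      · rw [min_eq_right h']; nlinarith [sq_nonneg (c+a-b)]
  linarith

private lemma backward_zero {n a : ℝ → ℝ} {t0 : ℝ} (ht0 : t0 ≤ 0)
    (hn : ∀ τ ∈ Set.Iic (0:ℝ), HasDerivAt n (a τ * n τ) τ)
    (ha : ContinuousOn a (Set.Iic 0))
    (hz : n t0 = 0) : ∀ s ≤ t0, n s = 0 := by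
  intro s hs
  rcases eq_or_lt_of_le hs with rfl | hs'
  · exact hz
  obtain ⟨M, hM⟩ := (isCompact_Icc (a := s) (b := t0)).exists_bound_of_continuousOn
    (ha.mono (fun x hx => Set.mem_Iic.mpr (le_trans hx.2 ht0)))
  have hsub : Set.Icc s t0 ⊆ Set.Iic (0:ℝ) := fun x hx => Set.mem_Iic.mpr (le_trans hx.2 ht0)
  have hd : ∀ x ∈ Set.Icc s t0,
      HasDerivAt (fun τ => (n τ)^2 * Real.exp (2*M*τ))
        ((2*(a x) + 2*M) * ((n x)^2 * Real.exp (2*M*x))) x := by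
    intro x hx
    have h1 : HasDerivAt (fun τ => (n τ)^2) (2 * n x * (a x * n x)) x := by
      have := (hn x (hsub hx)).pow 2
      refine this.congr_deriv ?_; push_cast; ring
    have h2 : HasDerivAt (fun τ => Real.exp (2*M*τ)) (Real.exp (2*M*x) * (2*M)) x := by
      have : HasDerivAt (fun τ : ℝ => 2*M*τ) (2*M) x := by
        simpa using (hasDerivAt_id x).const_mul (2*M)
      exact this.exp
    have := h1.mul h2
    refine this.congr_deriv ?_; ring
  have hmono : MonotoneOn (fun τ => (n τ)^2 * Real.exp (2*M*τ)) (Set.Icc s t0) := by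
    apply monotoneOn_of_deriv_nonneg (convex_Icc s t0)
    · exact fun x hx => (hd x hx).continuousAt.continuousWithinAt
    · intro x hx
      rw [interior_Icc] at hx
      exact ((hd x (Set.mem_Icc_of_Ioo hx)).differentiableAt).differentiableWithinAt
    · intro x hx
      rw [interior_Icc] at hx
      rw [(hd x (Set.mem_Icc_of_Ioo hx)).deriv]
      have haM : -M ≤ a x := by
        have := hM x (Set.mem_Icc_of_Ioo hx)
        rw [Real.norm_eq_abs] at this
        linarith [abs_le.mp this |>.1]
      exact mul_nonneg (by linarith) (by positivity)
  have hle := hmono (Set.mem_Icc.mpr ⟨le_refl s, hs⟩) (Set.mem_Icc.mpr ⟨hs, le_refl t0⟩) hs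
  simp only [hz] at hle
  have he := Real.exp_pos (2*M*s)
  have : (n s)^2 ≤ 0 := by nlinarith
  have h2 : (n s)^2 = 0 := le_antisymm this (sq_nonneg _)
  exact pow_eq_zero_iff (by norm_num) |>.mp h2
private lemma qf_ge {O Sp Sm : ℝ} : 2 * O ≤ qf 2 O Sp Sm := by
  unfold qf; nlinarith [sq_nonneg Sp, sq_nonneg Sm]

private lemma omega_upper {O Sp Sm n1 n2 n3 : ℝ → ℝ}
    (hsol : SolOn 2 (Set.Iic 0) O Sp Sm n1 n2 n3)
    (hOpos : ∀ τ ∈ Set.Iic (0:ℝ), 0 < O τ) :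
    ∃ T1 ≤ (0:ℝ), ∀ τ ≤ T1, O τ ≤ 2 := by
  have hO' : ∀ τ ∈ Set.Iic (0:ℝ),
      HasDerivAt O ((2 * qf 2 (O τ) (Sp τ) (Sm τ) - 4) * O τ) τ := by
    intro τ hτ
    have := hsol.hO τ hτ
    norm_num at this
    convert this using 2
  -- g τ = ((O τ)⁻¹ - 1) * exp (-(4*τ))
  have hg : ∀ τ ∈ Set.Iic (0:ℝ),
      HasDerivAt (fun τ => ((O τ)⁻¹ - 1) * Real.exp (-(4*τ)))
        ((-((2 * qf 2 (O τ) (Sp τ) (Sm τ) - 4) * O τ) / (O τ)^2) * Real.exp (-(4*τ))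
          + ((O τ)⁻¹ - 1) * (Real.exp (-(4*τ)) * (-4))) τ := by
    intro τ hτ
    have h1 : HasDerivAt (fun τ => (O τ)⁻¹ - 1)
        (-((2 * qf 2 (O τ) (Sp τ) (Sm τ) - 4) * O τ) / (O τ)^2) τ :=
      ((hO' τ hτ).inv (ne_of_gt (hOpos τ hτ))).sub_const 1
    have h2 : HasDerivAt (fun τ : ℝ => Real.exp (-(4*τ))) (Real.exp (-(4*τ)) * (-4)) τ := by
      have : HasDerivAt (fun τ : ℝ => -(4*τ)) (-4) τ := by
        exact (((hasDerivAt_id τ).const_mul (4:ℝ)).neg).congr_deriv (by ring)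
      exact this.exp
    exact h1.mul h2
  have hgle : ∀ τ ∈ Set.Iic (0:ℝ),
      ((-((2 * qf 2 (O τ) (Sp τ) (Sm τ) - 4) * O τ) / (O τ)^2) * Real.exp (-(4*τ))
          + ((O τ)⁻¹ - 1) * (Real.exp (-(4*τ)) * (-4))) ≤ 0 := by
    intro τ hτ
    have hO := hOpos τ hτ
    have hq := qf_ge (O := O τ) (Sp := Sp τ) (Sm := Sm τ)
    have he : (0:ℝ) < Real.exp (-(4*τ)) := Real.exp_pos _
    have heq : ((-((2 * qf 2 (O τ) (Sp τ) (Sm τ) - 4) * O τ) / (O τ)^2) * Real.exp (-(4*τ))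
          + ((O τ)⁻¹ - 1) * (Real.exp (-(4*τ)) * (-4)))
        = Real.exp (-(4*τ)) * ((4 * O τ - 2 * qf 2 (O τ) (Sp τ) (Sm τ)) / O τ) := by
      field_simp
      ring
    rw [heq]
    exact mul_nonpos_of_nonneg_of_nonpos he.le (div_nonpos_of_nonpos_of_nonneg (by linarith) hO.le)
  have hganti := anti_Iic hg hgle
  set g0 : ℝ := ((O 0)⁻¹ - 1) * Real.exp (-(4*(0:ℝ))) with hg0def
  set B : ℝ := |g0| + 1 with hBdef
  have hBpos : 0 < B := by positivity
  refine ⟨min 0 (Real.log (1/(2*B)) / 4), min_le_left _ _, ?_⟩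
  intro τ hτ
  have hτ0 : τ ≤ 0 := le_trans hτ (min_le_left _ _)
  have hexp : Real.exp (4*τ) ≤ 1/(2*B) := by
    have h1 : 4*τ ≤ Real.log (1/(2*B)) := by
      have := le_trans hτ (min_le_right _ _)
      linarith
    calc Real.exp (4*τ) ≤ Real.exp (Real.log (1/(2*B))) := Real.exp_le_exp.mpr h1
      _ = 1/(2*B) := Real.exp_log (by positivity)
  have hB : -B ≤ g0 := by
    have := abs_le.mp (le_refl |g0|)
    cases' abs_le.mp (le_refl |g0|) with h _
    linarith
  have hgτ : g0 ≤ ((O τ)⁻¹ - 1) * Real.exp (-(4*τ)) := hganti τ hτ0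
  have hinv : (1:ℝ)/2 ≤ (O τ)⁻¹ := by
    have hepos : (0:ℝ) < Real.exp (4*τ) := Real.exp_pos _
    have hrw : (O τ)⁻¹ - 1 = (((O τ)⁻¹ - 1) * Real.exp (-(4*τ))) * Real.exp (4*τ) := by
      rw [mul_assoc, ← Real.exp_add]
      norm_num
    have h1 : -B * Real.exp (4*τ) ≤ ((O τ)⁻¹ - 1) := by
      rw [hrw]
      exact mul_le_mul_of_nonneg_right (le_trans hB hgτ) hepos.le
    have h2 : -B * Real.exp (4*τ) ≥ -B * (1/(2*B)) := by
      have : B * Real.exp (4*τ) ≤ B * (1/(2*B)) := mul_le_mul_of_nonneg_left hexp hBpos.le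
      linarith
    have h3 : -B * (1/(2*B)) = -(1/2) := by field_simp
    linarith
  have hO := hOpos τ hτ0
  have := inv_anti₀ (by norm_num : (0:ℝ) < 1/2) hinv
  simpa using this

private lemma hasDerivAt_O' {O Sp Sm n1 n2 n3 : ℝ → ℝ}
    (hsol : SolOn 2 (Set.Iic 0) O Sp Sm n1 n2 n3) :
    ∀ τ ∈ Set.Iic (0:ℝ),
      HasDerivAt O ((2 * qf 2 (O τ) (Sp τ) (Sm τ) - 4) * O τ) τ := by
  intro τ hτ
  have := hsol.hO τ hτ
  norm_num at this
  convert this using 2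

private lemma two_q_sub_four {O Sp Sm a b c : ℝ}
    (hcon : Constraint O Sp Sm a b c) :
    2 * qf 2 O Sp Sm - 4 = -3 * (a^2 + b^2 + c^2 - 2*(a*b + b*c + c*a)) := by
  unfold Constraint at hcon
  unfold qf
  linarith

private lemma omega_lower {O Sp Sm n1 n2 n3 : ℝ → ℝ}
    (hsol : SolOn 2 (Set.Iic 0) O Sp Sm n1 n2 n3)
    (hOpos : ∀ τ ∈ Set.Iic (0:ℝ), 0 < O τ) :
    ∃ T2 ≤ (0:ℝ), ∃ m > (0:ℝ), ∀ τ ≤ T2, m ≤ O τ ∧ O τ ≤ 2 := by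
  obtain ⟨T1, hT1, hO2⟩ := omega_upper hsol hOpos
  have hO' := hasDerivAt_O' hsol
  have hOc : ContinuousOn O (Set.Iic (0:ℝ)) :=
    fun x hx => ((hsol.hO x hx).continuousAt).continuousWithinAt
  have hSpc : ContinuousOn Sp (Set.Iic (0:ℝ)) :=
    fun x hx => ((hsol.hSp x hx).continuousAt).continuousWithinAt
  have hSmc : ContinuousOn Sm (Set.Iic (0:ℝ)) :=
    fun x hx => ((hsol.hSm x hx).continuousAt).continuousWithinAt
  have hqc : ContinuousOn (fun τ => qf 2 (O τ) (Sp τ) (Sm τ)) (Set.Iic (0:ℝ)) := by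
    unfold qf
    exact (continuousOn_const.mul hOc).add
      (continuousOn_const.mul ((hSpc.pow 2).add (hSmc.pow 2)))
  by_cases hPz : ∃ t ∈ Set.Iic T1, n1 t * n2 t * n3 t = 0
  · -- Case A : some Nᵢ vanishes, hence vanishes identically to the past
    obtain ⟨t0, ht0, hP0⟩ := hPz
    have ht00 : t0 ≤ 0 := le_trans ht0 hT1
    have hEnn : ∀ τ ≤ t0, 0 ≤ (n1 τ)^2 + (n2 τ)^2 + (n3 τ)^2
        - 2*(n1 τ * n2 τ + n2 τ * n3 τ + n3 τ * n1 τ) := by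
      rcases mul_eq_zero.mp hP0 with h12 | h3
      · rcases mul_eq_zero.mp h12 with h1 | h2
        · have hz := backward_zero (a := fun τ => qf 2 (O τ) (Sp τ) (Sm τ) - 4 * Sp τ)
            ht00 hsol.hn1 (hqc.sub (continuousOn_const.mul hSpc)) h1
          intro τ hτ
          rw [hz τ hτ]
          nlinarith [sq_nonneg (n2 τ - n3 τ)]
        · have hz := backward_zero
            (a := fun τ => qf 2 (O τ) (Sp τ) (Sm τ) + 2 * Sp τ + 2 * Real.sqrt 3 * Sm τ)
            ht00 hsol.hn2
            ((hqc.add (continuousOn_const.mul hSpc)).add (continuousOn_const.mul hSmc)) h2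
          intro τ hτ
          rw [hz τ hτ]
          nlinarith [sq_nonneg (n1 τ - n3 τ)]
      · have hz := backward_zero
          (a := fun τ => qf 2 (O τ) (Sp τ) (Sm τ) + 2 * Sp τ - 2 * Real.sqrt 3 * Sm τ)
          ht00 hsol.hn3
          ((hqc.add (continuousOn_const.mul hSpc)).sub (continuousOn_const.mul hSmc)) h3
        intro τ hτ
        rw [hz τ hτ]
        nlinarith [sq_nonneg (n1 τ - n2 τ)]
    have hOd : ∀ τ ∈ Set.Iic t0, (2 * qf 2 (O τ) (Sp τ) (Sm τ) - 4) * O τ ≤ 0 := by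
      intro τ hτ
      have h2q := two_q_sub_four (hsol.hcon τ (le_trans hτ ht00))
      have hE := hEnn τ hτ
      have hO := hOpos τ (le_trans hτ ht00)
      nlinarith
    have hanti := anti_Iic (fun τ hτ => hO' τ (le_trans hτ ht00)) hOd
    exact ⟨t0, ht00, O t0, hOpos t0 ht00,
      fun τ hτ => ⟨hanti τ hτ, hO2 τ (le_trans hτ ht0)⟩⟩
  · -- Case B : the Nᵢ never vanish on Iic T1
    push_neg at hPz
    have hPd : ∀ τ ∈ Set.Iic (0:ℝ), HasDerivAt (fun τ => n1 τ * n2 τ * n3 τ)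
        (3 * qf 2 (O τ) (Sp τ) (Sm τ) * (n1 τ * n2 τ * n3 τ)) τ := by
      intro τ hτ
      have := ((hsol.hn1 τ hτ).mul (hsol.hn2 τ hτ)).mul (hsol.hn3 τ hτ)
      refine this.congr_deriv ?_
      simp only [Pi.mul_apply, Pi.pow_apply, Pi.inv_apply]
      ring
    have hF : ∀ τ ∈ Set.Iic (0:ℝ),
        HasDerivAt (fun τ => (n1 τ * n2 τ * n3 τ)^2 * ((O τ)^3)⁻¹ * Real.exp (-(12*τ)))
          0 τ := by
      intro τ hτ
      have hO := hOpos τ hτ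
      have h1 := (hPd τ hτ).pow 2
      have h2 := ((hO' τ hτ).pow 3).inv (pow_ne_zero 3 (ne_of_gt hO))
      have h3 : HasDerivAt (fun τ : ℝ => Real.exp (-(12*τ))) (Real.exp (-(12*τ)) * (-12)) τ := by
        have : HasDerivAt (fun τ : ℝ => -(12*τ)) (-12) τ := by
          exact (((hasDerivAt_id τ).const_mul (12:ℝ)).neg).congr_deriv (by ring)
        exact this.exp
      have hprod := (h1.mul h2).mul h3
      refine hprod.congr_deriv ?_
      simp only [Pi.mul_apply, Pi.pow_apply, Pi.inv_apply]
      have hOne : (O τ)^3 ≠ 0 := pow_ne_zero 3 (ne_of_gt hO)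
      field_simp
      ring
    have hFc : ∀ τ ≤ T1,
        (n1 τ * n2 τ * n3 τ)^2 * ((O τ)^3)⁻¹ * Real.exp (-(12*τ))
          = (n1 T1 * n2 T1 * n3 T1)^2 * ((O T1)^3)⁻¹ * Real.exp (-(12*T1)) := by
      intro τ hτ
      have hmon := mono_Iic (X := T1) (f' := fun _ => (0:ℝ))
        (fun s hs => hF s (le_trans hs hT1)) (fun s _ => le_refl 0)
      have hant := anti_Iic (X := T1) (f' := fun _ => (0:ℝ))
        (fun s hs => hF s (le_trans hs hT1)) (fun s _ => le_refl 0)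
      exact le_antisymm (hmon τ hτ) (hant τ hτ)
    set c2 : ℝ := (n1 T1 * n2 T1 * n3 T1)^2 * ((O T1)^3)⁻¹ * Real.exp (-(12*T1)) with hc2def
    have hc2pos : 0 < c2 := by
      have h1 : 0 < (n1 T1 * n2 T1 * n3 T1)^2 :=
        pow_two_pos_of_ne_zero (hPz T1 (le_refl T1))
      exact mul_pos (mul_pos h1 (inv_pos.mpr (pow_pos (hOpos T1 hT1) 3))) (Real.exp_pos _)
    have hP2 : ∀ τ ≤ T1, (n1 τ * n2 τ * n3 τ)^2 = c2 * Real.exp (12*τ) * (O τ)^3 := by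
      intro τ hτ
      have h := hFc τ hτ
      have hOne : (O τ)^3 ≠ 0 := pow_ne_zero 3 (ne_of_gt (hOpos τ (le_trans hτ hT1)))
      have hene : Real.exp (-(12*τ)) ≠ 0 := Real.exp_ne_zero _
      have h' : (n1 τ * n2 τ * n3 τ)^2 * Real.exp (-(12*τ)) = c2 * (O τ)^3 := by
        field_simp at h
        rw [div_eq_iff hOne] at h
        linear_combination h
      have : (n1 τ * n2 τ * n3 τ)^2 * (Real.exp (-(12*τ)) * Real.exp (12*τ))
          = c2 * (O τ)^3 * Real.exp (12*τ) := by
        rw [← mul_assoc, h']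
      rw [← Real.exp_add] at this
      norm_num at this
      linarith
    set c3 : ℝ := c2 ^ (((3:ℕ):ℝ))⁻¹ with hc3def
    have hc3pos : 0 < c3 := Real.rpow_pos_of_pos hc2pos _
    have hc3cube : c3 ^ (3:ℕ) = c2 := Real.rpow_inv_natCast_pow hc2pos.le (by norm_num)
    have hq_up : ∀ τ ≤ T1, 2 * qf 2 (O τ) (Sp τ) (Sm τ) - 4 ≤ 24 * c3 * Real.exp (4*τ) := by
      intro τ hτ
      have hτ0 : τ ≤ 0 := le_trans hτ hT1
      have hO := hOpos τ hτ0
      have hepos : (0:ℝ) < Real.exp (4*τ) := Real.exp_pos _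
      have hy0 : 0 ≤ c3 * Real.exp (4*τ) * O τ :=
        mul_nonneg (mul_nonneg hc3pos.le hepos.le) hO.le
      have hy3 : (c3 * Real.exp (4*τ) * O τ)^3 = (n1 τ * n2 τ * n3 τ)^2 := by
        rw [hP2 τ hτ, mul_pow, mul_pow, hc3cube]
        have he3 : (Real.exp (4*τ))^3 = Real.exp (12*τ) := by
          rw [← Real.exp_nat_mul]
          push_cast
          ring_nf
        rw [he3]
      have hEl := K_lower (a := n1 τ) (b := n2 τ) (c := n3 τ) hy0 hy3
      have h2q := two_q_sub_four (hsol.hcon τ hτ0)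
      have hle2 : O τ ≤ 2 := hO2 τ hτ
      nlinarith [mul_le_mul_of_nonneg_left hle2
        (mul_nonneg (by norm_num : (0:ℝ) ≤ 12) (mul_nonneg hc3pos.le hepos.le))]
    have hVd : ∀ τ ∈ Set.Iic (0:ℝ),
        HasDerivAt (fun τ => O τ * Real.exp (-(6*c3*Real.exp (4*τ))))
          (((2 * qf 2 (O τ) (Sp τ) (Sm τ) - 4) - 24*c3*Real.exp (4*τ))
            * (O τ * Real.exp (-(6*c3*Real.exp (4*τ))))) τ := by
      intro τ hτ
      have e4 : HasDerivAt (fun τ : ℝ => Real.exp (4*τ)) (Real.exp (4*τ) * 4) τ := by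
        have : HasDerivAt (fun τ : ℝ => 4*τ) 4 τ := by
          simpa using (hasDerivAt_id τ).const_mul (4:ℝ)
        exact this.exp
      have hinner : HasDerivAt (fun τ : ℝ => -(6*c3*Real.exp (4*τ)))
          (-(6*c3*(Real.exp (4*τ) * 4))) τ := (e4.const_mul (6*c3)).neg
      have := (hO' τ hτ).mul hinner.exp
      refine this.congr_deriv ?_
      ring
    have hVle : ∀ τ ∈ Set.Iic T1,
        (((2 * qf 2 (O τ) (Sp τ) (Sm τ) - 4) - 24*c3*Real.exp (4*τ))
          * (O τ * Real.exp (-(6*c3*Real.exp (4*τ))))) ≤ 0 := by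
      intro τ hτ
      have h1 := hq_up τ hτ
      have hO := hOpos τ (le_trans hτ hT1)
      exact mul_nonpos_of_nonpos_of_nonneg (by linarith)
        (mul_nonneg hO.le (Real.exp_pos _).le)
    have hVanti := anti_Iic (fun τ hτ => hVd τ (le_trans hτ hT1)) hVle
    refine ⟨T1, hT1, O T1 * Real.exp (-(6*c3*Real.exp (4*T1))),
      mul_pos (hOpos T1 hT1) (Real.exp_pos _), fun τ hτ => ⟨?_, hO2 τ hτ⟩⟩
    have h1 := hVanti τ hτ
    have hO := hOpos τ (le_trans hτ hT1)
    have hexple : Real.exp (-(6*c3*Real.exp (4*τ))) ≤ 1 :=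
      Real.exp_le_one_iff.mpr (neg_nonpos_of_nonneg
        (mul_nonneg (mul_nonneg (by norm_num) hc3pos.le) (Real.exp_pos _).le))
    calc O T1 * Real.exp (-(6*c3*Real.exp (4*T1)))
        ≤ O τ * Real.exp (-(6*c3*Real.exp (4*τ))) := h1
      _ ≤ O τ * 1 := mul_le_mul_of_nonneg_left hexple hO.le
      _ = O τ := mul_one _

private lemma product_decay {O Sp Sm : ℝ → ℝ} {T2 m : ℝ} (hT2 : T2 ≤ 0) (hm : 0 < m)
    (hO' : ∀ τ ∈ Set.Iic (0:ℝ),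
      HasDerivAt O ((2 * qf 2 (O τ) (Sp τ) (Sm τ) - 4) * O τ) τ)
    (hOpos : ∀ τ ∈ Set.Iic (0:ℝ), 0 < O τ)
    (hbounds : ∀ τ ≤ T2, m ≤ O τ ∧ O τ ≤ 2)
    (f cf : ℝ → ℝ)
    (hf : ∀ τ ∈ Set.Iic (0:ℝ), HasDerivAt f (cf τ * f τ) τ)
    (hcoef : ∀ τ ∈ Set.Iic (0:ℝ),
      4 * O τ ≤ 2 * cf τ - (2 * qf 2 (O τ) (Sp τ) (Sm τ) - 4)) :
    ∃ A : ℝ, 0 ≤ A ∧ ∀ τ ≤ T2, |f τ| ≤ A * Real.exp (2*m*τ) := by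
  have hW : ∀ τ ∈ Set.Iic (0:ℝ),
      HasDerivAt (fun τ => (f τ)^2 * (O τ)⁻¹ * Real.exp (-(4*m*τ)))
        ((2 * cf τ - (2 * qf 2 (O τ) (Sp τ) (Sm τ) - 4) - 4*m)
          * ((f τ)^2 * (O τ)⁻¹ * Real.exp (-(4*m*τ)))) τ := by
    intro τ hτ
    have hO := hOpos τ hτ
    have h1 := (hf τ hτ).pow 2
    have h2 := (hO' τ hτ).inv (ne_of_gt hO)
    have h3 : HasDerivAt (fun τ : ℝ => Real.exp (-(4*m*τ))) (Real.exp (-(4*m*τ)) * (-(4*m))) τ := by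
      have : HasDerivAt (fun τ : ℝ => -(4*m*τ)) (-(4*m)) τ := by
        exact (((hasDerivAt_id τ).const_mul (4*m)).neg).congr_deriv (by ring)
      exact this.exp
    have hprod := (h1.mul h2).mul h3
    refine hprod.congr_deriv ?_
    simp only [Pi.mul_apply, Pi.pow_apply, Pi.inv_apply]
    have hOne : O τ ≠ 0 := ne_of_gt hO
    field_simp
    ring
  have hWnn : ∀ τ ∈ Set.Iic (0:ℝ), 0 ≤ (f τ)^2 * (O τ)⁻¹ * Real.exp (-(4*m*τ)) := by
    intro τ hτ
    exact mul_nonneg (mul_nonneg (sq_nonneg _) (inv_nonneg.mpr (hOpos τ hτ).le))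
      (Real.exp_pos _).le
  have hWd : ∀ τ ∈ Set.Iic T2,
      0 ≤ (2 * cf τ - (2 * qf 2 (O τ) (Sp τ) (Sm τ) - 4) - 4*m)
        * ((f τ)^2 * (O τ)⁻¹ * Real.exp (-(4*m*τ))) := by
    intro τ hτ
    have h1 := hcoef τ (le_trans hτ hT2)
    have h2 := (hbounds τ hτ).1
    exact mul_nonneg (by linarith) (hWnn τ (le_trans hτ hT2))
  have hmon := mono_Iic (fun τ hτ => hW τ (le_trans hτ hT2)) hWd
  refine ⟨Real.sqrt (2 * ((f T2)^2 * (O T2)⁻¹ * Real.exp (-(4*m*T2)))),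
    Real.sqrt_nonneg _, ?_⟩
  intro τ hτ
  have hτ0 : τ ≤ 0 := le_trans hτ hT2
  have hO := hOpos τ hτ0
  have hOle := (hbounds τ hτ).2
  have hWT2 : 0 ≤ (f T2)^2 * (O T2)⁻¹ * Real.exp (-(4*m*T2)) := hWnn T2 hT2
  have hsq : (f τ)^2 ≤ 2 * ((f T2)^2 * (O T2)⁻¹ * Real.exp (-(4*m*T2))) * Real.exp (4*m*τ) := by
    have h := hmon τ hτ
    have h2 := mul_le_mul_of_nonneg_right h
      (le_of_lt (mul_pos hO (Real.exp_pos (4*m*τ))))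
    have hee : Real.exp (-(4*m*τ)) * Real.exp (4*m*τ) = 1 := by
      rw [← Real.exp_add]; norm_num
    have hoo : (O τ)⁻¹ * O τ = 1 := inv_mul_cancel₀ (ne_of_gt hO)
    have hkey : (f τ)^2 * (O τ)⁻¹ * Real.exp (-(4*m*τ)) * (O τ * Real.exp (4*m*τ))
        = (f τ)^2 := by
      calc (f τ)^2 * (O τ)⁻¹ * Real.exp (-(4*m*τ)) * (O τ * Real.exp (4*m*τ))
          = (f τ)^2 * ((O τ)⁻¹ * O τ) * (Real.exp (-(4*m*τ)) * Real.exp (4*m*τ)) := by ring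
        _ = (f τ)^2 := by rw [hoo, hee]; ring
    rw [hkey] at h2
    have h3 : (f T2)^2 * (O T2)⁻¹ * Real.exp (-(4*m*T2)) * (O τ * Real.exp (4*m*τ))
        ≤ (f T2)^2 * (O T2)⁻¹ * Real.exp (-(4*m*T2)) * (2 * Real.exp (4*m*τ)) := by
      apply mul_le_mul_of_nonneg_left _ hWT2
      exact mul_le_mul_of_nonneg_right hOle (Real.exp_pos _).le
    nlinarith [h2, h3]
  have habs : |f τ| = Real.sqrt ((f τ)^2) := (Real.sqrt_sq_eq_abs _).symm
  have hle := Real.sqrt_le_sqrt hsq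
  rw [← habs] at hle
  have hrhs : Real.sqrt (2 * ((f T2)^2 * (O T2)⁻¹ * Real.exp (-(4*m*T2))) * Real.exp (4*m*τ))
      = Real.sqrt (2 * ((f T2)^2 * (O T2)⁻¹ * Real.exp (-(4*m*T2)))) * Real.exp (2*m*τ) := by
    rw [Real.sqrt_mul (by linarith : (0:ℝ) ≤ 2 * ((f T2)^2 * (O T2)⁻¹ * Real.exp (-(4*m*T2))))]
    congr 1
    have : Real.exp (4*m*τ) = (Real.exp (2*m*τ))^2 := by
      rw [sq, ← Real.exp_add]; ring_nf
    rw [this, Real.sqrt_sq (Real.exp_pos _).le]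
  rw [hrhs] at hle
  exact hle

/-- in the stiff fluid case `γ = 2` with `Ω > 0`, the sum
`|N₁N₂| + |N₂N₃| + |N₃N₁|` decays exponentially: there are `α > 0` and `T` with
`|N₁N₂| + |N₂N₃| + |N₃N₁| ≤ e^{ατ}` for all `τ ≤ T`. -/
theorem stiff_products_decay
    (O Sp Sm n1 n2 n3 : ℝ → ℝ)
    (hsol : SolOn 2 (Set.Iic 0) O Sp Sm n1 n2 n3)
    (hOpos : ∀ τ ∈ Set.Iic (0:ℝ), 0 < O τ) :
    ∃ α > (0:ℝ), ∃ T ≤ (0:ℝ), ∀ τ ≤ T,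
      |n1 τ * n2 τ| + |n2 τ * n3 τ| + |n3 τ * n1 τ| ≤ Real.exp (α * τ) := by
  obtain ⟨T2, hT2, m, hm, hbounds⟩ := omega_lower hsol hOpos
  have hO' := hasDerivAt_O' hsol
  have hsq3 : Real.sqrt 3 ^ 2 = 3 := Real.sq_sqrt (by norm_num)
  -- N₁N₂
  obtain ⟨A1, hA1nn, hA1⟩ := product_decay hT2 hm hO' hOpos hbounds
    (fun τ => n1 τ * n2 τ)
    (fun τ => 2 * qf 2 (O τ) (Sp τ) (Sm τ) - 2 * Sp τ + 2 * Real.sqrt 3 * Sm τ)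
    (by
      intro τ hτ
      have := (hsol.hn1 τ hτ).mul (hsol.hn2 τ hτ)
      refine this.congr_deriv ?_
      ring)
    (by
      intro τ hτ
      unfold qf
      nlinarith [sq_nonneg (2 * Sp τ - 1), sq_nonneg (2 * Sm τ + Real.sqrt 3), hsq3])
  -- N₂N₃
  obtain ⟨A2, hA2nn, hA2⟩ := product_decay hT2 hm hO' hOpos hbounds
    (fun τ => n2 τ * n3 τ)
    (fun τ => 2 * qf 2 (O τ) (Sp τ) (Sm τ) + 4 * Sp τ)
    (by
      intro τ hτ
      have := (hsol.hn2 τ hτ).mul (hsol.hn3 τ hτ)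
      refine this.congr_deriv ?_
      ring)
    (by
      intro τ hτ
      unfold qf
      nlinarith [sq_nonneg (Sp τ + 1), sq_nonneg (Sm τ)])
  -- N₃N₁
  obtain ⟨A3, hA3nn, hA3⟩ := product_decay hT2 hm hO' hOpos hbounds
    (fun τ => n3 τ * n1 τ)
    (fun τ => 2 * qf 2 (O τ) (Sp τ) (Sm τ) - 2 * Sp τ - 2 * Real.sqrt 3 * Sm τ)
    (by
      intro τ hτ
      have := (hsol.hn3 τ hτ).mul (hsol.hn1 τ hτ)
      refine this.congr_deriv ?_
      ring)
    (by
      intro τ hτ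
      unfold qf
      nlinarith [sq_nonneg (2 * Sp τ - 1), sq_nonneg (2 * Sm τ - Real.sqrt 3), hsq3])
  set S : ℝ := A1 + A2 + A3 with hSdef
  have hSnn : 0 ≤ S := by positivity
  refine ⟨m, hm, min T2 (-(Real.log (S+1))/m), le_trans (min_le_left _ _) hT2, ?_⟩
  intro τ hτ
  have hτT2 : τ ≤ T2 := le_trans hτ (min_le_left _ _)
  have hb1 : |n1 τ * n2 τ| ≤ A1 * Real.exp (2*m*τ) := hA1 τ hτT2
  have hb2 : |n2 τ * n3 τ| ≤ A2 * Real.exp (2*m*τ) := hA2 τ hτT2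
  have hb3 : |n3 τ * n1 τ| ≤ A3 * Real.exp (2*m*τ) := hA3 τ hτT2
  have hexp1 : Real.exp (m*τ) ≤ (S+1)⁻¹ := by
    have h1 : τ ≤ -(Real.log (S+1))/m := le_trans hτ (min_le_right _ _)
    have h2 : m * τ ≤ -(Real.log (S+1)) := by
      have := mul_le_mul_of_nonneg_left h1 hm.le
      rwa [mul_div_cancel₀ _ (ne_of_gt hm)] at this
    calc Real.exp (m*τ) ≤ Real.exp (-(Real.log (S+1))) := Real.exp_le_exp.mpr h2
      _ = (S+1)⁻¹ := by rw [Real.exp_neg, Real.exp_log (by linarith)]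
  have hS1 : S * Real.exp (m*τ) ≤ 1 := by
    have h1 : S * Real.exp (m*τ) ≤ S * (S+1)⁻¹ := mul_le_mul_of_nonneg_left hexp1 hSnn
    have h2 : S * (S+1)⁻¹ ≤ 1 := by
      rw [← div_eq_mul_inv]
      exact (div_le_one (by linarith)).mpr (by linarith)
    exact le_trans h1 h2
  have hee : Real.exp (2*m*τ) = Real.exp (m*τ) * Real.exp (m*τ) := by
    rw [← Real.exp_add]; ring_nf
  have hsum : |n1 τ * n2 τ| + |n2 τ * n3 τ| + |n3 τ * n1 τ| ≤ S * Real.exp (2*m*τ) := by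
    have : S * Real.exp (2*m*τ) = A1 * Real.exp (2*m*τ) + A2 * Real.exp (2*m*τ)
        + A3 * Real.exp (2*m*τ) := by rw [hSdef]; ring
    linarith
  calc |n1 τ * n2 τ| + |n2 τ * n3 τ| + |n3 τ * n1 τ|
      ≤ S * Real.exp (2*m*τ) := hsum
    _ = (S * Real.exp (m*τ)) * Real.exp (m*τ) := by rw [hee]; ring
    _ ≤ 1 * Real.exp (m*τ) := mul_le_mul_of_nonneg_right hS1 (Real.exp_pos _).le
    _ = Real.exp (m*τ) := one_mul _

end WainwrightHsu
end
end

section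
/- (Monotonicity principle) Let f : ℝⁿ → ℝⁿ be smooth, let U ⊆ ℝⁿ be open, and let M ⊆ ℝⁿ be a closed set invariant under the flow of the vector field f. Let G : U → ℝ be a continuous function such that for every solution x of the ODE x' = f ∘ x, the function t ↦ G(x(t)) is strictly monotone on every interval during which x(t) ∈ U ∩ M. Then no solution of x' = f ∘ x whose image is entirely contained in U ∩ M has an α-limit point or an ω-limit point in U. -/
open Filter Topology Set

section MonotonicityAux
open Metric Classical
variable {E : Type*} [NormedAddCommGroup E] [NormedSpace ℝ E]


/-- Uniqueness of solutions of a C¹ ODE on an open order-connected set. -/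
theorem ode_uniq {f : E → E} (hf : ContDiff ℝ 1 f)
    {x z : ℝ → E} {s : Set ℝ} (hs : IsOpen s) (hsc : s.OrdConnected)
    (hx : ∀ t ∈ s, HasDerivAt x (f (x t)) t)
    (hz : ∀ t ∈ s, HasDerivAt z (f (z t)) t)
    {t₀ : ℝ} (ht₀ : t₀ ∈ s) (heq : x t₀ = z t₀) : EqOn x z s := by
  set Q : Set ℝ := {t | x t = z t} ∩ s with hQdef
  suffices h : s ⊆ Q from fun t ht => (h ht).1
  apply (isPreconnected_iff_ordConnected.mpr hsc).subset_of_closure_inter_subset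
  · -- Q is open
    rw [isOpen_iff_mem_nhds]
    rintro t₁ ⟨ht₁eq, ht₁s⟩
    obtain ⟨K, u, hu, hlip⟩ := (hf.contDiffAt (x := x t₁)).exists_lipschitzOnWith
    have hxc : ContinuousAt x t₁ := (hx t₁ ht₁s).continuousAt
    have hzc : ContinuousAt z t₁ := (hz t₁ ht₁s).continuousAt
    have hev : x =ᶠ[𝓝 t₁] z := by
      apply ODE_solution_unique_of_eventually (v := fun _ => f) (s := fun _ => u)
        (Eventually.of_forall fun _ => hlip) _ _ ht₁eq
      · filter_upwards [hs.mem_nhds ht₁s, hxc.preimage_mem_nhds hu] with t hts htu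
        exact ⟨hx t hts, htu⟩
      · filter_upwards [hs.mem_nhds ht₁s, hzc.preimage_mem_nhds (ht₁eq ▸ hu)] with t hts htu
        exact ⟨hz t hts, htu⟩
    filter_upwards [hev, hs.mem_nhds ht₁s] with t h1 h2 using ⟨h1, h2⟩
  · exact ⟨t₀, ht₀, heq, ht₀⟩
  · -- closure Q ∩ s ⊆ Q
    rintro t₁ ⟨htc, ht₁s⟩
    refine ⟨?_, ht₁s⟩
    have hne : (𝓝[Q] t₁).NeBot := mem_closure_iff_nhdsWithin_neBot.mp htc
    have h1 : Tendsto x (𝓝[Q] t₁) (𝓝 (x t₁)) := (hx t₁ ht₁s).continuousAt.continuousWithinAt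
    have h2 : Tendsto z (𝓝[Q] t₁) (𝓝 (z t₁)) := (hz t₁ ht₁s).continuousAt.continuousWithinAt
    have h3 : Tendsto x (𝓝[Q] t₁) (𝓝 (z t₁)) :=
      h2.congr' (by filter_upwards [eventually_mem_nhdsWithin] with t ht using ht.1.symm)
    exact tendsto_nhds_unique h1 h3


/-- Uniform local existence: solutions starting anywhere in a small closed ball around `p`
exist for a uniform amount of time. -/
theorem ode_uniform_exist [CompleteSpace E] {f : E → E} (hf : ContDiff ℝ 1 f) (p : E) :
    ∃ r > (0:ℝ), ∃ ε > (0:ℝ), ∀ q ∈ Metric.closedBall p r, ∀ t₀ : ℝ,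
      ∃ z : ℝ → E, z t₀ = q ∧ ∀ t ∈ Ioo (t₀ - ε) (t₀ + ε), HasDerivAt z (f (z t)) t := by
  obtain ⟨r, hr, ε, hε, H⟩ :=
    (hf.contDiffAt (x := p)).exists_forall_mem_closedBall_exists_eq_forall_mem_Ioo_hasDerivAt 0
  refine ⟨r, hr, ε, hε, fun q hq t₀ => ?_⟩
  obtain ⟨α, hα0, hα⟩ := H q hq
  refine ⟨fun t => α (t - t₀), by simpa using hα0, fun t ht => ?_⟩
  have h1 : t - t₀ ∈ Ioo (0 - ε) (0 + ε) := ⟨by linarith [ht.1], by linarith [ht.2]⟩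
  exact HasDerivAt.comp_sub_const t t₀ (hα _ h1)

theorem ordConnected_union' {A B : Set ℝ} (hA : A.OrdConnected) (hB : B.OrdConnected)
    {c : ℝ} (hcA : c ∈ A) (hcB : c ∈ B) : (A ∪ B).OrdConnected := by
  constructor
  rintro u (huA | huB) v (hvA | hvB) w hw
  · exact Or.inl (hA.out huA hvA hw)
  · rcases le_total w c with h | h
    · exact Or.inl (hA.out huA hcA ⟨hw.1, h⟩)
    · exact Or.inr (hB.out hcB hvB ⟨h, hw.2⟩)
  · rcases le_total w c with h | h
    · exact Or.inr (hB.out huB hcB ⟨hw.1, h⟩)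
    · exact Or.inl (hA.out hcA hvA ⟨h, hw.2⟩)
  · exact Or.inr (hB.out huB hvB hw)


theorem ode_no_limit_pt_bdd [CompleteSpace E] {f : E → E} (hf : ContDiff ℝ 1 f)
    {x : ℝ → E} {s : Set ℝ} (hs : IsOpen s) (hsc : s.OrdConnected) (hsne : s.Nonempty)
    (hx : ∀ t ∈ s, HasDerivAt x (f (x t)) t)
    (hmax : ∀ (y : ℝ → E) (s' : Set ℝ), IsOpen s' → s'.OrdConnected →
      s ⊆ s' → (∀ t ∈ s', HasDerivAt y (f (y t)) t) → (∀ t ∈ s, y t = x t) → s' = s)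
    (hbdd : BddAbove s) {p : E} {tk : ℕ → ℝ} (htk : ∀ k, tk k ∈ s)
    (hlim : ∀ t ∈ s, ∀ᶠ k in atTop, t < tk k)
    (hconv : Tendsto (fun k => x (tk k)) atTop (𝓝 p)) : False := by
  set b : ℝ := sSup s with hb
  have hle : ∀ t ∈ s, t ≤ b := fun t ht => le_csSup hbdd ht
  have htkb : Tendsto tk atTop (𝓝 b) := by
    rw [tendsto_order]
    constructor
    · intro c hc
      obtain ⟨t', ht's, hct'⟩ := exists_lt_of_lt_csSup hsne hc
      filter_upwards [hlim t' ht's] with k hk using hct'.trans hk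
    · intro c hc
      exact Eventually.of_forall fun k => lt_of_le_of_lt (hle _ (htk k)) hc
  obtain ⟨r, hr, ε, hε, hexist⟩ := ode_uniform_exist hf p
  have h1 : ∀ᶠ k in atTop, x (tk k) ∈ Metric.closedBall p r :=
    hconv (Metric.closedBall_mem_nhds p hr)
  have h2 : ∀ᶠ k in atTop, b - ε / 2 < tk k := htkb (Ioi_mem_nhds (by linarith))
  obtain ⟨k, hk1, hk2⟩ := (h1.and h2).exists
  obtain ⟨z, hz0, hz⟩ := hexist (x (tk k)) hk1 (tk k)
  -- x = z on the overlap
  set V : Set ℝ := s ∩ Ioo (tk k - ε) (tk k + ε) with hV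
  have hVo : IsOpen V := hs.inter isOpen_Ioo
  have hVc : V.OrdConnected := hsc.inter Set.ordConnected_Ioo
  have htkV : tk k ∈ V := ⟨htk k, by constructor <;> simp <;> linarith⟩
  have heqV : EqOn x z V :=
    ode_uniq hf hVo hVc (fun t ht => hx t ht.1) (fun t ht => hz t ht.2) htkV hz0.symm
  -- glue
  set y : ℝ → E := fun t => if t ∈ s then x t else z t with hy
  have hys : ∀ t ∈ s, y t = x t := fun t ht => if_pos ht
  have hyI : ∀ t ∈ Ioo (tk k - ε) (tk k + ε), y t = z t := by
    intro t ht
    by_cases h : t ∈ s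
    · rw [hys t h]; exact heqV ⟨h, ht⟩
    · exact if_neg h
  set s' : Set ℝ := s ∪ Ioo (tk k - ε) (tk k + ε) with hs'
  have hs'o : IsOpen s' := hs.union isOpen_Ioo
  have hs'c : s'.OrdConnected := ordConnected_union' hsc Set.ordConnected_Ioo (htk k) htkV.2
  have hy' : ∀ t ∈ s', HasDerivAt y (f (y t)) t := by
    rintro t (ht | ht)
    · have hev : y =ᶠ[𝓝 t] x := by
        filter_upwards [hs.mem_nhds ht] with t' ht' using hys t' ht'
      rw [hys t ht]
      exact (hx t ht).congr_of_eventuallyEq hev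
    · have hev : y =ᶠ[𝓝 t] z := by
        filter_upwards [isOpen_Ioo.mem_nhds ht] with t' ht' using hyI t' ht'
      rw [hyI t ht]
      exact (hz t ht).congr_of_eventuallyEq hev
  have hss' : s ⊆ s' := subset_union_left
  have := hmax y s' hs'o hs'c hss' hy' hys
  -- contradiction: a point beyond b is in s' = s
  set w : ℝ := (b + (tk k + ε)) / 2 with hw
  have hbw : b < w := by
    have : b < tk k + ε := by linarith
    rw [hw]; linarith
  have hwI : w ∈ Ioo (tk k - ε) (tk k + ε) := by
    constructor
    · have := hle _ (htk k); rw [hw]; linarith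
    · have : b < tk k + ε := by linarith
      rw [hw]; linarith
  have : w ∈ s := this ▸ Or.inr hwI
  exact absurd (hle w this) (not_le.mpr hbw)
theorem ode_no_limit_pt_unbdd [CompleteSpace E] [ProperSpace E] {f : E → E}
    (hf : ContDiff ℝ 1 f)
    {U : Set E} (hU : IsOpen U) {M : Set E} (hM : IsClosed M)
    (hMinv : ∀ (y : ℝ → E) (s : Set ℝ), IsOpen s → s.OrdConnected →
      (∀ t ∈ s, HasDerivAt y (f (y t)) t) →
      ∀ t₀ ∈ s, y t₀ ∈ M → ∀ t ∈ s, y t ∈ M)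
    {G : E → ℝ} (hG : ContinuousOn G U)
    (hmono : ∀ (y : ℝ → E) (s : Set ℝ), IsOpen s → s.OrdConnected →
      (∀ t ∈ s, HasDerivAt y (f (y t)) t) →
      ∀ I : Set ℝ, I ⊆ s → I.OrdConnected → (∀ t ∈ I, y t ∈ U ∩ M) →
      StrictMonoOn (fun t => G (y t)) I ∨ StrictAntiOn (fun t => G (y t)) I)
    {x : ℝ → E} {s : Set ℝ} (hs : IsOpen s) (hsc : s.OrdConnected)
    (hx : ∀ t ∈ s, HasDerivAt x (f (x t)) t)
    (hxim : ∀ t ∈ s, x t ∈ U ∩ M)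
    (hnb : ¬ BddAbove s) {p : E} (hp : p ∈ U) {tk : ℕ → ℝ} (htk : ∀ k, tk k ∈ s)
    (hlim : ∀ t ∈ s, ∀ᶠ k in atTop, t < tk k)
    (hconv : Tendsto (fun k => x (tk k)) atTop (𝓝 p)) : False := by
  -- `s` is upward closed from any of its points
  have hup : ∀ t ∈ s, ∀ c, t ≤ c → c ∈ s := by
    intro t ht c hc
    obtain ⟨d, hd, hcd⟩ := not_bddAbove_iff.mp hnb c
    exact hsc.out ht hd ⟨hc, hcd.le⟩
  -- `tk → ∞`
  have htktop : Tendsto tk atTop atTop := by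
    rw [Filter.tendsto_atTop]
    intro c
    obtain ⟨d, hd, hcd⟩ := not_bddAbove_iff.mp hnb c
    filter_upwards [hlim d hd] with k hk using (hcd.trans hk).le
  -- `p ∈ M`
  have hpM : p ∈ M := hM.mem_of_tendsto hconv (Eventually.of_forall fun k => (hxim _ (htk k)).2)
  -- local solution through `p`
  obtain ⟨z, hz0, ε₀, hε₀, hz⟩ := (hf.contDiffAt (x := p)).exists_forall_mem_closedBall_exists_eq_forall_mem_Ioo_hasDerivAt₀ 0
  set J : Set ℝ := Ioo (0 - ε₀) (0 + ε₀) with hJ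
  have hJo : IsOpen J := isOpen_Ioo
  have hJc : J.OrdConnected := ordConnected_Ioo
  have h0J : (0:ℝ) ∈ J := by constructor <;> simp [hε₀]
  have hzM : ∀ t ∈ J, z t ∈ M := hMinv z J hJo hJc hz 0 h0J (by rw [hz0]; exact hpM)
  -- choose `δ` such that `z` stays in `U` on `[0, δ]`
  have hzc0 : ContinuousAt z 0 := (hz 0 h0J).continuousAt
  have hevU : ∀ᶠ t in 𝓝 (0:ℝ), z t ∈ U := hzc0.preimage_mem_nhds (hU.mem_nhds (by rw [hz0]; exact hp))
  obtain ⟨η, hη, hηU⟩ := Metric.eventually_nhds_iff.mp hevU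
  set δ : ℝ := min (η / 2) (ε₀ / 2) with hδ
  have hδ0 : 0 < δ := lt_min (by linarith) (by linarith)
  have hδη : δ < η := lt_of_le_of_lt (min_le_left _ _) (by linarith)
  have hδε : δ < ε₀ := lt_of_le_of_lt (min_le_right _ _) (by linarith)
  have hIccJ : Icc 0 δ ⊆ J := fun t ht => ⟨by simp; linarith [ht.1], by simp; linarith [ht.2]⟩
  have hzU : ∀ t ∈ Icc 0 δ, z t ∈ U := by
    intro t ht
    apply hηU
    rw [Real.dist_eq, sub_zero, abs_of_nonneg ht.1]
    linarith [ht.2]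
  have hzcont : ContinuousOn z (Icc 0 δ) :=
    fun t ht => ((hz t (hIccJ ht)).continuousAt).continuousWithinAt
  -- bound on the trajectory of `z` and Lipschitz constant on a large ball
  obtain ⟨ρ, hρ⟩ := (isCompact_Icc (a := (0:ℝ)) (b := δ)).exists_bound_of_continuousOn hzcont
  have hρ0 : 0 ≤ ρ := le_trans (norm_nonneg _) (hρ 0 ⟨le_rfl, hδ0.le⟩)
  set B : Set E := Metric.closedBall 0 (ρ + 2) with hB
  have hBclosed : IsClosed B := Metric.isClosed_closedBall
  obtain ⟨κ, hκ⟩ := (isCompact_closedBall (0:E) (ρ + 2)).exists_bound_of_continuousOn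
    ((hf.continuous_fderiv one_ne_zero).continuousOn)
  set K : NNReal := Real.toNNReal κ with hKdef
  have hlipB : LipschitzOnWith K f B :=
    Convex.lipschitzOnWith_of_nnnorm_fderiv_le (fun y _ => (hf.differentiable one_ne_zero).differentiableAt)
      (fun y hy => by rw [← norm_toNNReal]; exact Real.toNNReal_mono (hκ y hy))
      (convex_closedBall _ _)
  set m : ℝ := Real.exp (-(K * δ)) with hm
  have hm0 : 0 < m := Real.exp_pos _
  have hm1 : m ≤ 1 := Real.exp_le_one_iff.mpr (neg_nonpos.mpr (by positivity))
  -- Key continuous-dependence estimate via Grönwall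
  have key : ∀ k, dist (x (tk k)) p ≤ m → ∀ τ ∈ Icc 0 δ,
      dist (x (tk k + τ)) (z τ) ≤ dist (x (tk k)) p * Real.exp (K * τ) := by
    intro k hdk
    set a : ℝ := tk k with ha
    set w : ℝ → E := fun τ => x (a + τ) with hw
    set d : ℝ := dist (x a) p with hd
    have hws : ∀ τ, 0 ≤ τ → a + τ ∈ s := fun τ hτ => hup a (htk k) _ (by linarith)
    have hwd : ∀ τ, 0 ≤ τ → HasDerivAt w (f (w τ)) τ :=
      fun τ hτ => HasDerivAt.comp_const_add a τ (hx _ (hws τ hτ))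
    have hw0 : w 0 = x a := by rw [hw]; simp
    have hzB : ∀ σ ∈ Icc 0 δ, z σ ∈ B := by
      intro σ hσ
      rw [hB, Metric.mem_closedBall, dist_zero_right]
      linarith [hρ σ hσ]
    have hw0B : w 0 ∈ B := by
      rw [hB, Metric.mem_closedBall, dist_zero_right, hw0]
      have h1 : ‖x a‖ ≤ dist (x a) p + ‖p‖ := by
        rw [← dist_zero_right, ← dist_zero_right]
        exact dist_triangle _ _ _
      have h2 : ‖p‖ ≤ ρ := by rw [← hz0]; exact hρ 0 ⟨le_rfl, hδ0.le⟩
      linarith [hdk, hm1]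
    set A : Set ℝ := {τ ∈ Icc 0 δ | ∀ σ ∈ Icc 0 τ, w σ ∈ B} with hA
    have h0A : (0:ℝ) ∈ A := ⟨⟨le_rfl, hδ0.le⟩, fun σ hσ => by
      rw [le_antisymm hσ.2 hσ.1]; exact hw0B⟩
    have hAbdd : BddAbove A := (bddAbove_Icc (a := (0:ℝ)) (b := δ)).mono (sep_subset _ _)
    set c : ℝ := sSup A with hc
    have hc0 : 0 ≤ c := le_csSup hAbdd h0A
    have hcδ : c ≤ δ := csSup_le ⟨0, h0A⟩ fun τ hτ => hτ.1.2
    have hwBlt : ∀ σ, 0 ≤ σ → σ < c → w σ ∈ B := by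
      intro σ hσ0 hσc
      obtain ⟨τ, hτA, hστ⟩ := exists_lt_of_lt_csSup ⟨0, h0A⟩ hσc
      exact hτA.2 σ ⟨hσ0, hστ.le⟩
    have hwB : ∀ σ ∈ Icc 0 c, w σ ∈ B := by
      intro σ hσ
      rcases lt_or_eq_of_le hσ.2 with hlt | heq
      · exact hwBlt σ hσ.1 hlt
      · rcases eq_or_lt_of_le hσ.1 with h0 | h0σ
        · exact h0 ▸ hw0B
        · have hten : Tendsto w (𝓝[<] σ) (𝓝 (w σ)) :=
            ((hwd σ hσ.1).continuousAt).continuousWithinAt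
          apply hBclosed.mem_of_tendsto hten
          filter_upwards [Ioo_mem_nhdsLT h0σ] with τ hτ
          exact hwBlt τ hτ.1.le (heq ▸ hτ.2)
    have hwcont : ContinuousOn w (Icc 0 c) :=
      fun τ hτ => ((hwd τ hτ.1).continuousAt).continuousWithinAt
    have hzcont' : ContinuousOn z (Icc 0 c) := hzcont.mono (Icc_subset_Icc_right hcδ)
    have grw : ∀ τ ∈ Icc 0 c, dist (w τ) (z τ) ≤ d * Real.exp (K * (τ - 0)) := by
      apply dist_le_of_trajectories_ODE_of_mem (v := fun _ => f) (s := fun _ => B)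
        (fun _ _ => hlipB) hwcont
        (fun τ hτ => (hwd τ hτ.1).hasDerivWithinAt)
        (fun τ hτ => hwB τ ⟨hτ.1, hτ.2.le⟩)
        hzcont'
        (fun τ hτ => (hz τ (hIccJ ⟨hτ.1, hτ.2.le.trans hcδ⟩)).hasDerivWithinAt)
        (fun τ hτ => hzB τ ⟨hτ.1, hτ.2.le.trans hcδ⟩)
      rw [hw0, hz0]
    have hceq : c = δ := by
      rcases eq_or_lt_of_le hcδ with h | hclt
      · exact h
      exfalso
      have hbd : dist (w c) (z c) ≤ 1 := by
        have h1 := grw c ⟨hc0, le_rfl⟩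
        have h2 : d * Real.exp (K * (c - 0)) ≤ m * Real.exp (K * δ) := by
          apply mul_le_mul hdk _ (Real.exp_pos _).le hm0.le
          apply Real.exp_le_exp.mpr
          rw [sub_zero]
          exact mul_le_mul_of_nonneg_left hcδ K.coe_nonneg
        have h3 : m * Real.exp (K * δ) = 1 := by
          rw [hm, ← Real.exp_add]; simp
        linarith
      have hwcB : ‖w c‖ ≤ ρ + 1 := by
        have h1 : ‖w c‖ ≤ dist (w c) (z c) + ‖z c‖ := by
          rw [← dist_zero_right, ← dist_zero_right]
          exact dist_triangle _ _ _
        linarith [hρ c ⟨hc0, hcδ⟩, hbd]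
      have hcontn : ContinuousAt (fun σ => ‖w σ‖) c := ((hwd c hc0).continuousAt).norm
      have hev2 : (fun σ => ‖w σ‖) ⁻¹' Iio (ρ + 2) ∈ 𝓝 c :=
        hcontn (Iio_mem_nhds (by linarith : ‖w c‖ < ρ + 2))
      obtain ⟨η', hη', hball⟩ := Metric.mem_nhds_iff.mp hev2
      set c' : ℝ := min δ (c + η' / 2) with hc'
      have hcc' : c < c' := lt_min hclt (by linarith)
      have hc'A : c' ∈ A := by
        refine ⟨⟨hc0.trans hcc'.le, min_le_left _ _⟩, fun σ hσ => ?_⟩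
        rcases le_or_gt σ c with h | h
        · exact hwB σ ⟨hσ.1, h⟩
        · have hσball : σ ∈ Metric.ball c η' := by
            rw [Metric.mem_ball, Real.dist_eq, abs_of_pos (by linarith : 0 < σ - c)]
            have : σ ≤ c + η' / 2 := hσ.2.trans (min_le_right _ _)
            linarith
          have := hball hσball
          rw [mem_preimage, mem_Iio] at this
          rw [hB, Metric.mem_closedBall, dist_zero_right]
          exact this.le
      exact absurd (le_csSup hAbdd hc'A) (not_le.mpr hcc')
    intro τ hτ
    have := grw τ (hceq ▸ hτ)
    rwa [sub_zero] at this
  -- the shifted trajectory converges to `z δ`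
  have hsk : ∀ k, tk k + δ ∈ s := fun k => hup _ (htk k) _ (by linarith)
  have htend : Tendsto (fun k => x (tk k + δ)) atTop (𝓝 (z δ)) := by
    rw [tendsto_iff_dist_tendsto_zero]
    have hconv' : Tendsto (fun k => dist (x (tk k)) p) atTop (𝓝 0) :=
      tendsto_iff_dist_tendsto_zero.mp hconv
    apply tendsto_of_tendsto_of_tendsto_of_le_of_le'
      (g := fun _ => (0:ℝ)) (h := fun k => dist (x (tk k)) p * Real.exp (K * δ))
      tendsto_const_nhds
      (by simpa using hconv'.mul_const (Real.exp (K * δ)))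
      (Eventually.of_forall fun k => dist_nonneg)
    filter_upwards [hconv (Metric.closedBall_mem_nhds p hm0)] with k hk
    exact key k (Metric.mem_closedBall.mp hk) δ ⟨hδ0.le, le_rfl⟩
  -- limits of `G` along the two sequences
  have hGpt : Tendsto (fun k => G (x (tk k))) atTop (𝓝 (G p)) :=
    (hG.continuousAt (hU.mem_nhds hp)).tendsto.comp hconv
  have hzδU : z δ ∈ U := hzU δ ⟨hδ0.le, le_rfl⟩
  have hGzt : Tendsto (fun k => G (x (tk k + δ))) atTop (𝓝 (G (z δ))) :=
    (hG.continuousAt (hU.mem_nhds hzδU)).tendsto.comp htend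
  have hΦ := hmono x s hs hsc hx s Subset.rfl hsc hxim
  have heqG : G (z δ) = G p := by
    rcases hΦ with hmn | hmn
    · refine le_antisymm ?_ ?_
      · refine le_of_tendsto hGzt (Eventually.of_forall fun k => ?_)
        refine ge_of_tendsto hGpt ?_
        filter_upwards [htktop.eventually_gt_atTop (tk k + δ)] with j hj
        exact (hmn (hsk k) (htk j) hj).le
      · exact le_of_tendsto_of_tendsto' hGpt hGzt
          (fun k => (hmn (htk k) (hsk k) (by linarith)).le)
    · refine le_antisymm ?_ ?_
      · exact le_of_tendsto_of_tendsto' hGzt hGpt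
          (fun k => (hmn (htk k) (hsk k) (by linarith)).le)
      · refine ge_of_tendsto hGzt (Eventually.of_forall fun k => ?_)
        refine le_of_tendsto hGpt ?_
        filter_upwards [htktop.eventually_gt_atTop (tk k + δ)] with j hj
        exact (hmn (hsk k) (htk j) hj).le
  -- strict monotonicity of `G ∘ z` on `[0, δ]` gives the contradiction
  have hzim : ∀ t ∈ Icc 0 δ, z t ∈ U ∩ M := fun t ht => ⟨hzU t ht, hzM t (hIccJ ht)⟩
  have h0m : (0:ℝ) ∈ Icc 0 δ := left_mem_Icc.mpr hδ0.le
  have hδm : δ ∈ Icc (0:ℝ) δ := right_mem_Icc.mpr hδ0.le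
  have heqG0 : G (z 0) = G p := by rw [hz0]
  rcases hmono z J hJo hJc hz (Icc 0 δ) hIccJ ordConnected_Icc hzim with h | h
  · have h2 := h h0m hδm hδ0
    simp only [heqG0, heqG, lt_self_iff_false] at h2
  · have h2 := h h0m hδm hδ0
    simp only [heqG0, heqG, lt_self_iff_false] at h2
theorem ode_no_limit_pt [CompleteSpace E] [ProperSpace E] {f : E → E}
    (hf : ContDiff ℝ 1 f)
    {U : Set E} (hU : IsOpen U) {M : Set E} (hM : IsClosed M)
    (hMinv : ∀ (y : ℝ → E) (s : Set ℝ), IsOpen s → s.OrdConnected →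
      (∀ t ∈ s, HasDerivAt y (f (y t)) t) →
      ∀ t₀ ∈ s, y t₀ ∈ M → ∀ t ∈ s, y t ∈ M)
    {G : E → ℝ} (hG : ContinuousOn G U)
    (hmono : ∀ (y : ℝ → E) (s : Set ℝ), IsOpen s → s.OrdConnected →
      (∀ t ∈ s, HasDerivAt y (f (y t)) t) →
      ∀ I : Set ℝ, I ⊆ s → I.OrdConnected → (∀ t ∈ I, y t ∈ U ∩ M) →
      StrictMonoOn (fun t => G (y t)) I ∨ StrictAntiOn (fun t => G (y t)) I)
    {x : ℝ → E} {s : Set ℝ} (hs : IsOpen s) (hsc : s.OrdConnected) (hsne : s.Nonempty)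
    (hx : ∀ t ∈ s, HasDerivAt x (f (x t)) t)
    (hmax : ∀ (y : ℝ → E) (s' : Set ℝ), IsOpen s' → s'.OrdConnected →
      s ⊆ s' → (∀ t ∈ s', HasDerivAt y (f (y t)) t) → (∀ t ∈ s, y t = x t) → s' = s)
    (hxim : ∀ t ∈ s, x t ∈ U ∩ M)
    {p : E} (hp : p ∈ U) {tk : ℕ → ℝ} (htk : ∀ k, tk k ∈ s)
    (hlim : ∀ t ∈ s, ∀ᶠ k in atTop, t < tk k)
    (hconv : Tendsto (fun k => x (tk k)) atTop (𝓝 p)) : False := by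
  by_cases hbdd : BddAbove s
  · exact ode_no_limit_pt_bdd hf hs hsc hsne hx hmax hbdd htk hlim hconv
  · exact ode_no_limit_pt_unbdd hf hU hM hMinv hG hmono hs hsc hx hxim hbdd hp htk hlim hconv

theorem ordConnected_neg' {A : Set ℝ} (h : A.OrdConnected) : (Neg.neg ⁻¹' A).OrdConnected := by
  constructor
  intro u hu v hv w hw
  exact h.out hv hu ⟨neg_le_neg hw.2, neg_le_neg hw.1⟩

theorem hasDerivAt_comp_neg {y : ℝ → E} {v : E} {t : ℝ} (h : HasDerivAt y v (-t)) :
    HasDerivAt (fun t => y (-t)) (-v) t := by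
  have := h.scomp t (hasDerivAt_neg t)
  simpa [Function.comp_def] using this

end MonotonicityAux

/-- the monotonicity principle: let `f : ℝⁿ → ℝⁿ` be smooth, `U` open,
`M` closed and invariant under the flow of `f`, and `G : U → ℝ` continuous and strictly
monotone along any piece of solution lying in `U ∩ M`.  Then no solution, defined on a
maximal open interval `s` and whose image is contained in `U ∩ M`, has an α- or ω-limit
point in `U`. -/
theorem monotonicity_principle {n : ℕ}
    (f : (Fin n → ℝ) → (Fin n → ℝ)) (hf : ContDiff ℝ (⊤ : ℕ∞) f)
    (U : Set (Fin n → ℝ)) (hU : IsOpen U)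
    (M : Set (Fin n → ℝ)) (hM : IsClosed M)
    (hMinv : ∀ (y : ℝ → (Fin n → ℝ)) (s : Set ℝ), IsOpen s → s.OrdConnected →
      (∀ t ∈ s, HasDerivAt y (f (y t)) t) →
      ∀ t₀ ∈ s, y t₀ ∈ M → ∀ t ∈ s, y t ∈ M)
    (G : (Fin n → ℝ) → ℝ) (hG : ContinuousOn G U)
    (hmono : ∀ (y : ℝ → (Fin n → ℝ)) (s : Set ℝ), IsOpen s → s.OrdConnected →
      (∀ t ∈ s, HasDerivAt y (f (y t)) t) →
      ∀ I : Set ℝ, I ⊆ s → I.OrdConnected → (∀ t ∈ I, y t ∈ U ∩ M) →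
      StrictMonoOn (fun t => G (y t)) I ∨ StrictAntiOn (fun t => G (y t)) I)
    (x : ℝ → (Fin n → ℝ)) (s : Set ℝ) (hs : IsOpen s) (hsc : s.OrdConnected)
    (hsne : s.Nonempty)
    (hx : ∀ t ∈ s, HasDerivAt x (f (x t)) t)
    (hmax : ∀ (y : ℝ → (Fin n → ℝ)) (s' : Set ℝ), IsOpen s' → s'.OrdConnected →
      s ⊆ s' → (∀ t ∈ s', HasDerivAt y (f (y t)) t) → (∀ t ∈ s, y t = x t) → s' = s)
    (hxim : ∀ t ∈ s, x t ∈ U ∩ M) :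
    ¬ ∃ p ∈ U,
      ((∃ tk : ℕ → ℝ, (∀ k, tk k ∈ s) ∧ (∀ t ∈ s, ∀ᶠ k in atTop, tk k < t) ∧
          Tendsto (fun k => x (tk k)) atTop (𝓝 p)) ∨
       (∃ tk : ℕ → ℝ, (∀ k, tk k ∈ s) ∧ (∀ t ∈ s, ∀ᶠ k in atTop, t < tk k) ∧
          Tendsto (fun k => x (tk k)) atTop (𝓝 p))) := by
  rintro ⟨p, hp, hcase⟩
  have hf1 : ContDiff ℝ 1 f := hf.of_le (by simp)
  rcases hcase with ⟨tk, htk, hlim, hconv⟩ | ⟨tk, htk, hlim, hconv⟩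
  · -- α-limit point: reflect time
    set g : (Fin n → ℝ) → (Fin n → ℝ) := fun v => -(f v) with hg
    have hg1 : ContDiff ℝ 1 g := hf1.neg
    set x' : ℝ → (Fin n → ℝ) := fun t => x (-t) with hx'def
    set s' : Set ℝ := Neg.neg ⁻¹' s with hs'def
    have hmem : ∀ {t : ℝ}, t ∈ s' ↔ -t ∈ s := fun {t} => Iff.rfl
    have hs'o : IsOpen s' := hs.preimage continuous_neg
    have hs'c : s'.OrdConnected := ordConnected_neg' hsc
    have hs'ne : s'.Nonempty := by
      obtain ⟨t, ht⟩ := hsne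
      exact ⟨-t, by simp only [hs'def, mem_preimage, neg_neg]; exact ht⟩
    have hx's : ∀ t ∈ s', HasDerivAt x' (g (x' t)) t :=
      fun t ht => hasDerivAt_comp_neg (hx (-t) ht)
    -- reflected invariance
    have hMinv' : ∀ (y : ℝ → (Fin n → ℝ)) (σ : Set ℝ), IsOpen σ → σ.OrdConnected →
        (∀ t ∈ σ, HasDerivAt y (g (y t)) t) →
        ∀ t₀ ∈ σ, y t₀ ∈ M → ∀ t ∈ σ, y t ∈ M := by
      intro y σ ho hc hy t₀ ht₀ hm t ht
      have hrev : ∀ τ ∈ Neg.neg ⁻¹' σ, HasDerivAt (fun u => y (-u)) (f (y (-τ))) τ := by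
        intro τ hτ
        have := hasDerivAt_comp_neg (y := y) (hy (-τ) hτ)
        simpa [hg] using this
      have := hMinv (fun u => y (-u)) (Neg.neg ⁻¹' σ) (ho.preimage continuous_neg)
        (ordConnected_neg' hc) hrev (-t₀) (by simpa using ht₀) (by simpa using hm)
        (-t) (by simpa using ht)
      simpa using this
    -- reflected monotonicity
    have hmono' : ∀ (y : ℝ → (Fin n → ℝ)) (σ : Set ℝ), IsOpen σ → σ.OrdConnected →
        (∀ t ∈ σ, HasDerivAt y (g (y t)) t) →
        ∀ I : Set ℝ, I ⊆ σ → I.OrdConnected → (∀ t ∈ I, y t ∈ U ∩ M) →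
        StrictMonoOn (fun t => G (y t)) I ∨ StrictAntiOn (fun t => G (y t)) I := by
      intro y σ ho hc hy I hIσ hIc hIim
      have hrev : ∀ τ ∈ Neg.neg ⁻¹' σ, HasDerivAt (fun u => y (-u)) (f (y (-τ))) τ := by
        intro τ hτ
        have := hasDerivAt_comp_neg (y := y) (hy (-τ) hτ)
        simpa [hg] using this
      have hIσ' : Neg.neg ⁻¹' I ⊆ Neg.neg ⁻¹' σ := fun τ hτ => hIσ hτ
      have := hmono (fun u => y (-u)) (Neg.neg ⁻¹' σ) (ho.preimage continuous_neg)
        (ordConnected_neg' hc) hrev (Neg.neg ⁻¹' I) hIσ' (ordConnected_neg' hIc)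
        (fun τ hτ => hIim (-τ) hτ)
      rcases this with h | h
      · right
        intro a ha b hb hab
        have := h (show -b ∈ Neg.neg ⁻¹' I by simpa using hb)
          (show -a ∈ Neg.neg ⁻¹' I by simpa using ha) (by linarith)
        simpa using this
      · left
        intro a ha b hb hab
        have := h (show -b ∈ Neg.neg ⁻¹' I by simpa using hb)
          (show -a ∈ Neg.neg ⁻¹' I by simpa using ha) (by linarith)
        simpa using this
    -- reflected maximality
    have hmax' : ∀ (y : ℝ → (Fin n → ℝ)) (σ : Set ℝ), IsOpen σ → σ.OrdConnected →
        s' ⊆ σ → (∀ t ∈ σ, HasDerivAt y (g (y t)) t) → (∀ t ∈ s', y t = x' t) → σ = s' := by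
      intro y σ ho hc hss hy heq
      have hrev : ∀ τ ∈ Neg.neg ⁻¹' σ, HasDerivAt (fun u => y (-u)) (f (y (-τ))) τ := by
        intro τ hτ
        have := hasDerivAt_comp_neg (y := y) (hy (-τ) hτ)
        simpa [hg] using this
      have hsub : s ⊆ Neg.neg ⁻¹' σ := by
        intro t ht
        have : -t ∈ s' := by simpa [hs'def] using ht
        exact hss this
      have heq' : ∀ t ∈ s, y (-t) = x t := by
        intro t ht
        have h1 : -t ∈ s' := by simpa [hs'def] using ht
        have := heq (-t) h1
        simpa [hx'def] using this
      have hfin := hmax (fun u => y (-u)) (Neg.neg ⁻¹' σ) (ho.preimage continuous_neg)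
        (ordConnected_neg' hc) hsub hrev heq'
      ext t
      constructor
      · intro ht
        have : -t ∈ Neg.neg ⁻¹' σ := by simpa using ht
        rw [hfin] at this
        simpa [hs'def] using this
      · intro ht
        exact hss ht
    have hxim' : ∀ t ∈ s', x' t ∈ U ∩ M := fun t ht => hxim (-t) ht
    have htk' : ∀ k, -(tk k) ∈ s' := fun k => by
      simp only [hs'def, mem_preimage, neg_neg]; exact htk k
    have hlim' : ∀ t ∈ s', ∀ᶠ k in atTop, t < -(tk k) := by
      intro t ht
      filter_upwards [hlim (-t) ht] with k hk
      linarith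
    have hconv' : Tendsto (fun k => x' (-(tk k))) atTop (𝓝 p) := by
      have : (fun k => x' (-(tk k))) = fun k => x (tk k) := by
        funext k; simp [hx'def]
      rw [this]; exact hconv
    exact ode_no_limit_pt hg1 hU hM hMinv' hG hmono' hs'o hs'c hs'ne hx's hmax' hxim'
      hp htk' hlim' hconv'
  · exact ode_no_limit_pt hf1 hU hM hMinv hG hmono hs hsc hsne hx hmax hxim
      hp htk hlim hconv
end
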